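/- arXiv:1611.04100 — 5 statements merged into one kernel-verified Lean document; each statement's English description precedes it below -/
import Mathlib

section
/- Let q ≥ 1 and let (G,L) be a list-coloring instance with color set {1,…,q} such that |L(u)| ≥ deg_G(u)+1 for every vertex u. Let v be a vertex of G with neighbors v_1,…,v_d listed in a fixed order, and let i ∈ L(v). For 1 ≤ k ≤ d and each color j define the color lists L_{k,j} on G_v by L_{k,j}(u) = L(u)∖{j} if u = v_ℓ for some ℓ < k, and L_{k,j}(u) = L(u) otherwise. Then Pr_{G,L}[c(v)=i] = ∏_{k=1}^{d} (1 − Pr_{G_v,L_{k,i}}[c(v_k)=i]) / ( Σ_{j∈L(v)} ∏_{k=1}^{d} (1 − Pr_{G_v,L_{k,j}}[c(v_k)=j]) ). -/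
/-!
Write `Z_k(j)` for the number of proper colorings of `G_v` with the lists `L_{k,j}`.
Erasing `j` from the list of `v_k` keeps exactly the colorings with `c(v_k) ≠ j`, so
`1 - Pr_{G_v,L_{k,j}}[c(v_k) = j] = Z_{k+1}(j) / Z_k(j)` and the product over `k` telescopes
to `Z_d(j) / Z_0`, where `Z_0` does not depend on `j`. As `v` is isolated in `G_v`,
recoloring `v` identifies the fibers over the colors of `L(v)`, and the colorings in the
fiber `c(v) = j` of the lists `L_{d,j}` (no neighbor of `v` colored `j`) are exactly the proper
colorings of `(G, L)` with `c(v) = j`. Hence the `j`-th product is a `j`-independent multiple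
of `#{c : c(v) = j}`, and normalizing gives the marginal. The degree condition makes all
counts positive, by greedy coloring.
-/

open Finset

variable {V : Type} [Fintype V] [DecidableEq V]

/-- The set of proper colorings of the list-coloring instance `(G, L)` with color set `Fin q`. -/
def properColorings (G : SimpleGraph V) [DecidableRel G.Adj]
    (q : ℕ) (L : V → Finset (Fin q)) : Finset (V → Fin q) :=
  Finset.univ.filter
    (fun c => (∀ u, c u ∈ L u) ∧ ∀ u w : V, G.Adj u w → c u ≠ c w)

/-- The marginal probability `Pr_{G,L}[c(v) = i]` under the uniform distribution on
proper colorings of `(G, L)`. -/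
noncomputable def margin (G : SimpleGraph V) [DecidableRel G.Adj]
    (q : ℕ) (L : V → Finset (Fin q)) (v : V) (i : Fin q) : ℝ :=
  (((properColorings G q L).filter (fun c => c v = i)).card : ℝ) /
    ((properColorings G q L).card : ℝ)

/-- The graph `G_v` obtained from `G` by deleting the vertex `v` and all its incident
edges (formalized on the same vertex set by isolating `v`; since the deleted vertex is
isolated, marginal probabilities at the remaining vertices are unchanged). -/
def deleteVertex (G : SimpleGraph V) (v : V) : SimpleGraph V where
  Adj a b := G.Adj a b ∧ a ≠ v ∧ b ≠ v
  symm := ⟨fun a b ⟨h, ha, hb⟩ => ⟨h.symm, hb, ha⟩⟩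
  loopless := ⟨fun a h => G.loopless.irrefl a h.1⟩

instance (G : SimpleGraph V) [DecidableRel G.Adj] (v : V) :
    DecidableRel (deleteVertex G v).Adj :=
  fun a b => inferInstanceAs (Decidable (G.Adj a b ∧ a ≠ v ∧ b ≠ v))

/-- The color lists `L_{k,j}` : remove color `j` from the lists of the neighbors
`v_ℓ` with `ℓ < k` (0-indexed, the neighbors are listed by `vs`). -/
def modLists {q : ℕ} (L : V → Finset (Fin q)) (vs : List V) (k : ℕ) (j : Fin q) :
    V → Finset (Fin q) :=
  fun u => if u ∈ vs.take k then (L u).erase j else L u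

section ListColoring

variable {q : ℕ} {G : SimpleGraph V} [DecidableRel G.Adj] {L : V → Finset (Fin q)}

@[simp]
theorem mem_properColorings {c : V → Fin q} :
    c ∈ properColorings G q L ↔ (∀ u, c u ∈ L u) ∧ ∀ u w, G.Adj u w → c u ≠ c w := by
  simp [properColorings]

theorem exists_coloring_properOn (hL : ∀ u, G.degree u < (L u).card) (S : Finset V) :
    ∃ c : V → Fin q, (∀ u, c u ∈ L u) ∧ ∀ u ∈ S, ∀ w ∈ S, G.Adj u w → c u ≠ c w := by
  induction S using Finset.induction_on with
  | empty =>
    have hne (u : V) : (L u).Nonempty := card_pos.mp ((Nat.zero_le _).trans_lt (hL u))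
    exact ⟨fun u => (hne u).choose, fun u => (hne u).choose_spec, by simp⟩
  | insert a S _ ih =>
    obtain ⟨c, hcL, hc⟩ := ih
    obtain ⟨j, hjL, hjc⟩ := exists_mem_notMem_of_card_lt_card
      (card_image_le.trans_lt (hL a) : ((G.neighborFinset a).image c).card < (L a).card)
    have hfresh (w : V) (hw : G.Adj a w) : j ≠ Function.update c a j w := by
      rw [Function.update_of_ne hw.ne']
      exact fun h => hjc (mem_image.mpr ⟨w, by simpa using hw, h.symm⟩)
    refine ⟨Function.update c a j, fun u => ?_, fun u hu w hw huw => ?_⟩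
    · rcases eq_or_ne u a with rfl | hu
      · simpa using hjL
      · simpa [hu] using hcL u
    · rcases eq_or_ne u a with rfl | hua
      · simpa using hfresh w huw
      rcases eq_or_ne w a with rfl | hwa
      · simpa using (hfresh u huw.symm).symm
      simpa [hua, hwa] using hc u (by simpa [hua] using hu) w (by simpa [hwa] using hw) huw

theorem properColorings_nonempty (hL : ∀ u, G.degree u < (L u).card) :
    (properColorings G q L).Nonempty := by
  obtain ⟨c, hcL, hc⟩ := exists_coloring_properOn hL univ
  exact ⟨c, mem_properColorings.mpr ⟨hcL, fun u w => hc u (mem_univ u) w (mem_univ w)⟩⟩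

theorem properColorings_update_erase (u : V) (j : Fin q) :
    properColorings G q (Function.update L u ((L u).erase j)) =
      (properColorings G q L).filter (· u ≠ j) := by
  ext c
  simp only [mem_filter, mem_properColorings]
  constructor
  · rintro ⟨hcL, hc⟩
    have hu := hcL u
    simp only [Function.update_self, mem_erase] at hu
    refine ⟨⟨fun w => ?_, hc⟩, hu.1⟩
    rcases eq_or_ne w u with rfl | hw
    · exact hu.2
    · simpa [hw] using hcL w
  · rintro ⟨⟨hcL, hc⟩, hcu⟩
    refine ⟨fun w => ?_, hc⟩
    rcases eq_or_ne w u with rfl | hw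
    · simpa using ⟨hcu, hcL w⟩
    · simpa [hw] using hcL w

theorem one_sub_margin (h : (properColorings G q L).Nonempty) (u : V) (j : Fin q) :
    1 - margin G q L u j =
      ((properColorings G q (Function.update L u ((L u).erase j))).card : ℝ) /
        (properColorings G q L).card := by
  have hsplit := card_filter_add_card_filter_not (s := properColorings G q L) (· u = j)
  rw [← properColorings_update_erase] at hsplit
  have hZ : ((properColorings G q L).card : ℝ) ≠ 0 := by exact_mod_cast h.card_pos.ne'
  rw [margin, eq_div_iff hZ, sub_mul, div_mul_cancel₀ _ hZ, ← hsplit]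
  push_cast
  ring

theorem card_filter_eq_of_isolated {v : V} (hv : ∀ w, ¬ G.Adj v w) {j j' : Fin q}
    (hj : j ∈ L v) (hj' : j' ∈ L v) :
    ((properColorings G q L).filter (· v = j)).card =
      ((properColorings G q L).filter (· v = j')).card := by
  have recolor (a b : Fin q) (ha : a ∈ L v) (c : V → Fin q)
      (hc : c ∈ (properColorings G q L).filter (· v = b)) :
      Function.update c v a ∈ (properColorings G q L).filter (· v = a) := by
    simp only [mem_filter, mem_properColorings] at hc ⊢
    refine ⟨⟨fun u => ?_, fun u w huw => ?_⟩, by simp⟩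
    · rcases eq_or_ne u v with rfl | hu
      · simpa using ha
      · simpa [hu] using hc.1.1 u
    · have hu : u ≠ v := by rintro rfl; exact hv w huw
      have hw : w ≠ v := by rintro rfl; exact hv u huw.symm
      simpa [hu, hw] using hc.1.2 u w huw
  have update_back (a b : Fin q) (c : V → Fin q)
      (hc : c ∈ (properColorings G q L).filter (· v = b)) :
      Function.update (Function.update c v a) v b = c := by
    rw [Function.update_idem, ← (mem_filter.mp hc).2, Function.update_eq_self]
  exact card_bij' (fun c _ => Function.update c v j') (fun c _ => Function.update c v j)
    (recolor j' j hj') (recolor j j' hj) (update_back j' j) (update_back j j')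

theorem card_properColorings_of_isolated {v : V} (hv : ∀ w, ¬ G.Adj v w) {j : Fin q}
    (hj : j ∈ L v) :
    (properColorings G q L).card =
      (L v).card * ((properColorings G q L).filter (· v = j)).card := by
  rw [card_eq_sum_card_fiberwise (f := fun c => c v) (t := L v)
    (fun c hc => (mem_properColorings.mp hc).1 v)]
  exact sum_const_nat fun j' hj' => card_filter_eq_of_isolated hv hj' hj

end ListColoring

section DeleteVertex

variable {G : SimpleGraph V} [DecidableRel G.Adj] {v : V}

theorem neighborFinset_deleteVertex_subset (u : V) :
    (deleteVertex G v).neighborFinset u ⊆ G.neighborFinset u :=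
  fun w hw => (G.mem_neighborFinset u w).mpr ((SimpleGraph.mem_neighborFinset _ u w).mp hw).1

theorem degree_deleteVertex_le (u : V) : (deleteVertex G v).degree u ≤ G.degree u :=
  card_le_card (neighborFinset_deleteVertex_subset u)

theorem degree_deleteVertex_lt {u : V} (h : G.Adj v u) :
    (deleteVertex G v).degree u < G.degree u := by
  refine card_lt_card ⟨neighborFinset_deleteVertex_subset u, fun hsub => ?_⟩
  have := hsub ((G.mem_neighborFinset u v).mpr h.symm)
  exact ((SimpleGraph.mem_neighborFinset _ u v).mp this).2.2 rfl

end DeleteVertex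

section ModLists

variable {U : Type} [DecidableEq U] {q : ℕ} {L : U → Finset (Fin q)} {vs : List U} {j : Fin q}

theorem modLists_zero : modLists L vs 0 j = L := by
  funext u
  simp [modLists]

theorem modLists_of_notMem {u : U} (hu : u ∉ vs) (k : ℕ) : modLists L vs k j u = L u :=
  if_neg fun h => hu (List.mem_of_mem_take h)

theorem modLists_succ (hnd : vs.Nodup) {k : ℕ} (hk : k < vs.length) :
    modLists L vs (k + 1) j =
      Function.update (modLists L vs k j) vs[k] ((modLists L vs k j vs[k]).erase j) := by
  have hnew : vs[k] ∉ vs.take k := by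
    intro h
    obtain ⟨i, hi, hik⟩ := List.mem_take_iff_getElem.mp h
    have := (hnd.getElem_inj_iff (hi := by omega)).mp hik
    omega
  funext u
  simp only [modLists, ← List.take_concat_get hk, List.concat_eq_append, List.mem_append,
    List.mem_singleton]
  rcases eq_or_ne u vs[k] with rfl | hu
  · simp [hnew]
  · simp [hu, modLists]

end ModLists

theorem degree_deleteVertex_lt_card_modLists {q : ℕ} {G : SimpleGraph V} [DecidableRel G.Adj]
    {L : V → Finset (Fin q)} {v : V} {vs : List V} (hL : ∀ u, G.degree u < (L u).card)
    (hvs : ∀ u ∈ vs, G.Adj v u) (j : Fin q) (k : ℕ) (u : V) :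
    (deleteVertex G v).degree u < (modLists L vs k j u).card := by
  by_cases hu : u ∈ vs.take k
  · have := degree_deleteVertex_lt (hvs u (List.mem_of_mem_take hu))
    have := hL u
    have := pred_card_le_card_erase (s := L u) (a := j)
    rw [modLists, if_pos hu]
    omega
  · rw [modLists, if_neg hu]
    exact (degree_deleteVertex_le u).trans_lt (hL u)

theorem prod_range_div_of_ne_zero {K : Type*} [CommGroupWithZero K] {f : ℕ → K}
    (hf : ∀ k, f k ≠ 0) (n : ℕ) : ∏ k ∈ range n, f (k + 1) / f k = f n / f 0 :=
  prod_range_induction _ (fun k => f k / f 0) (div_self (hf 0)) n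
    fun k _ => (div_mul_div_cancel₀' (hf k) _ _).symm

section Recursion

variable {q : ℕ} {G : SimpleGraph V} [DecidableRel G.Adj] {L : V → Finset (Fin q)}
  {vs : List V} {j : Fin q}

theorem prod_one_sub_margin_modLists (hnd : vs.Nodup)
    (hG : ∀ k u, G.degree u < (modLists L vs k j u).card) :
    ∏ k : Fin vs.length, (1 - margin G q (modLists L vs k j) (vs.get k) j) =
      ((properColorings G q (modLists L vs vs.length j)).card : ℝ) /
        (properColorings G q L).card := by
  set Z : ℕ → ℝ := fun k => (properColorings G q (modLists L vs k j)).card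
  have hZ (k : ℕ) : Z k ≠ 0 :=
    Nat.cast_ne_zero.mpr (properColorings_nonempty (hG k)).card_pos.ne'
  have hfactor (k : Fin vs.length) :
      1 - margin G q (modLists L vs k j) (vs.get k) j = Z (k + 1) / Z k := by
    rw [one_sub_margin (properColorings_nonempty (hG k)), List.get_eq_getElem,
      ← modLists_succ hnd k.isLt]
  rw [prod_congr rfl fun k _ => hfactor k, Fin.prod_univ_eq_prod_range (fun k => Z (k + 1) / Z k),
    prod_range_div_of_ne_zero hZ]
  simp only [Z, modLists_zero]

variable {v : V}

theorem filter_properColorings_deleteVertex_modLists (hvs : ∀ u, u ∈ vs ↔ G.Adj v u) :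
    (properColorings (deleteVertex G v) q (modLists L vs vs.length j)).filter (· v = j) =
      (properColorings G q L).filter (· v = j) := by
  ext c
  simp only [mem_filter, mem_properColorings, modLists, List.take_length, hvs]
  constructor
  · rintro ⟨⟨hcL, hc⟩, rfl⟩
    have hnbr (u : V) (hu : G.Adj v u) : c u ≠ c v ∧ c u ∈ L u := by simpa [hu] using hcL u
    refine ⟨⟨fun u => ?_, fun u w huw => ?_⟩, rfl⟩
    · by_cases hu : G.Adj v u
      · exact (hnbr u hu).2
      · simpa [hu] using hcL u
    · rcases eq_or_ne u v with rfl | hu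
      · exact (hnbr w huw).1.symm
      rcases eq_or_ne w v with rfl | hw
      · exact (hnbr u huw.symm).1
      exact hc u w ⟨huw, hu, hw⟩
  · rintro ⟨⟨hcL, hc⟩, rfl⟩
    refine ⟨⟨fun u => ?_, fun u w huw => hc u w huw.1⟩, rfl⟩
    split_ifs with hu
    · exact mem_erase.mpr ⟨(hc v u hu).symm, hcL u⟩
    · exact hcL u

theorem card_properColorings_deleteVertex_modLists (hvs : ∀ u, u ∈ vs ↔ G.Adj v u)
    (hj : j ∈ L v) :
    (properColorings (deleteVertex G v) q (modLists L vs vs.length j)).card =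
      (L v).card * ((properColorings G q L).filter (· v = j)).card := by
  have hv : v ∉ vs := fun h => G.loopless.irrefl v ((hvs v).mp h)
  have hiso := card_properColorings_of_isolated (G := deleteVertex G v)
    (L := modLists L vs vs.length j) (fun w h => h.2.1 rfl) (j := j)
    (by rwa [modLists_of_notMem hv])
  rwa [modLists_of_notMem hv, filter_properColorings_deleteVertex_modLists hvs] at hiso

end Recursion

theorem recursion_identity_general (q : ℕ)
    (G : SimpleGraph V) [DecidableRel G.Adj] (L : V → Finset (Fin q))
    (hL : ∀ u : V, G.degree u + 1 ≤ (L u).card)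
    (v : V) (vs : List V) (hnd : vs.Nodup)
    (hvs : vs.toFinset = G.neighborFinset v)
    (i : Fin q) (hi : i ∈ L v) :
    margin G q L v i =
      (∏ k : Fin vs.length,
        (1 - margin (deleteVertex G v) q (modLists L vs k i) (vs.get k) i)) /
      (∑ j ∈ L v, ∏ k : Fin vs.length,
        (1 - margin (deleteVertex G v) q (modLists L vs k j) (vs.get k) j)) := by
  have hvs' (u : V) : u ∈ vs ↔ G.Adj v u := by
    rw [← List.mem_toFinset, hvs, SimpleGraph.mem_neighborFinset]
  set C : ℝ := (L v).card / (properColorings (deleteVertex G v) q L).card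
  have hprod (j : Fin q) (hj : j ∈ L v) :
      ∏ k : Fin vs.length, (1 - margin (deleteVertex G v) q (modLists L vs k j) (vs.get k) j) =
        C * ((properColorings G q L).filter (· v = j)).card := by
    rw [prod_one_sub_margin_modLists hnd
        (degree_deleteVertex_lt_card_modLists hL (fun u => (hvs' u).mp) j),
      card_properColorings_deleteVertex_modLists hvs' hj]
    push_cast
    ring
  have hC : C ≠ 0 := div_ne_zero (Nat.cast_ne_zero.mpr (card_ne_zero_of_mem hi))
    (Nat.cast_ne_zero.mpr (properColorings_nonempty
      fun u => (degree_deleteVertex_le u).trans_lt (hL u)).card_pos.ne')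
  rw [sum_congr rfl hprod, hprod i hi, ← mul_sum, mul_div_mul_left _ _ hC, ← Nat.cast_sum,
    ← card_eq_sum_card_fiberwise fun c hc => (mem_properColorings.mp hc).1 v]
  rfl

/-- The basic recursion for the marginal probability:
`Pr_{G,L}[c(v)=i] = ∏_k (1 − Pr_{G_v,L_{k,i}}[c(v_k)=i]) /
  Σ_{j∈L(v)} ∏_k (1 − Pr_{G_v,L_{k,j}}[c(v_k)=j])`. -/
theorem recursion_identity (q : ℕ) (hq : 1 ≤ q)
    (G : SimpleGraph V) [DecidableRel G.Adj] (L : V → Finset (Fin q))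
    (hL : ∀ u : V, G.degree u + 1 ≤ (L u).card)
    (v : V) (vs : List V) (hnd : vs.Nodup)
    (hvs : vs.toFinset = G.neighborFinset v)
    (i : Fin q) (hi : i ∈ L v) :
    margin G q L v i =
      (∏ k : Fin vs.length,
        (1 - margin (deleteVertex G v) q (modLists L vs k i) (vs.get k) i)) /
      (∑ j ∈ L v, ∏ k : Fin vs.length,
        (1 - margin (deleteVertex G v) q (modLists L vs k j) (vs.get k) j)) :=
  recursion_identity_general q G L hL v vs hnd hvs i hi
end

section
/- Define G_0(w,f) = (1 − f)·t·(1/2 − t) where t = 1 − w/(1 − f). Then G_0 is concave on the convex region {(w,f) : 0 ≤ f ≤ 1/2 and (1 − f)/2 ≤ w ≤ 1 − f}. Consequently, for any points (w_1,f_1),…,(w_n,f_n) in this region, (G_0(w_1,f_1)+⋯+G_0(w_n,f_n))/n ≤ G_0((w_1+⋯+w_n)/n, (f_1+⋯+f_n)/n). -/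
/-- `G₀(w, f) = (1 − f)·t·(1/2 − t)` where `t = 1 − w/(1 − f)`. -/
noncomputable def G0 (w f : ℝ) : ℝ :=
  (1 - f) * ((1 - w / (1 - f)) * (1 / 2 - (1 - w / (1 - f))))

/-- The convex region `{(w, f) : 0 ≤ f ≤ 1/2, (1 − f)/2 ≤ w ≤ 1 − f}`. -/
def G0Region : Set (ℝ × ℝ) :=
  {p | 0 ≤ p.2 ∧ p.2 ≤ 1 / 2 ∧ (1 - p.2) / 2 ≤ p.1 ∧ p.1 ≤ 1 - p.2}

lemma G0_eq (w f : ℝ) (hf : 1 - f ≠ 0) :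
    G0 w f = (3 * w - (1 - f)) / 2 - w ^ 2 / (1 - f) := by
  unfold G0; field_simp; ring

lemma G0Region_convex : Convex ℝ G0Region := by
  intro x hx y hy a b ha hb hab
  obtain ⟨h1, h2, h3, h4⟩ := hx
  obtain ⟨h1', h2', h3', h4'⟩ := hy
  refine ⟨?_, ?_, ?_, ?_⟩ <;> simp only [Prod.smul_fst, Prod.smul_snd, Prod.fst_add,
    Prod.snd_add, smul_eq_mul] <;> nlinarith

lemma G0_concaveOn : ConcaveOn ℝ G0Region (fun p => G0 p.1 p.2) := by
  refine ⟨G0Region_convex, ?_⟩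
  rintro ⟨w1, f1⟩ ⟨h1, h2, h3, h4⟩ ⟨w2, f2⟩ ⟨h1', h2', h3', h4'⟩ a b ha hb hab
  simp only [Prod.smul_fst, Prod.smul_snd, Prod.fst_add, Prod.snd_add, smul_eq_mul]
  have hu1 : (0:ℝ) < 1 - f1 := by linarith
  have hu2 : (0:ℝ) < 1 - f2 := by linarith
  have hU : (0:ℝ) < 1 - (a * f1 + b * f2) := by nlinarith
  rw [G0_eq _ _ hu1.ne', G0_eq _ _ hu2.ne', G0_eq _ _ hU.ne']
  have key : (a * w1 + b * w2) ^ 2 / (1 - (a * f1 + b * f2)) ≤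
      a * (w1 ^ 2 / (1 - f1)) + b * (w2 ^ 2 / (1 - f2)) := by
    have hrhs : a * (w1 ^ 2 / (1 - f1)) + b * (w2 ^ 2 / (1 - f2))
        = (a * w1 ^ 2 * (1 - f2) + b * w2 ^ 2 * (1 - f1)) / ((1 - f1) * (1 - f2)) := by
      field_simp
    rw [hrhs, div_le_div_iff₀ hU (mul_pos hu1 hu2)]
    have hb' : b = 1 - a := by linarith
    subst hb'
    nlinarith [mul_nonneg (mul_nonneg ha hb) (sq_nonneg (w1 * (1 - f2) - w2 * (1 - f1)))]
  nlinarith [key]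

/-- `G₀` is concave on the region, and consequently satisfies the Jensen-type
averaging inequality for any finite family of points of the region. -/
theorem G0_concave_and_jensen :
    ConcaveOn ℝ G0Region (fun p => G0 p.1 p.2) ∧
      ∀ (n : ℕ), 0 < n → ∀ p : Fin n → ℝ × ℝ, (∀ k, p k ∈ G0Region) →
        (∑ k, G0 (p k).1 (p k).2) / n ≤
          G0 ((∑ k, (p k).1) / n) ((∑ k, (p k).2) / n) := by
  refine ⟨G0_concaveOn, ?_⟩
  intro n hn p hp
  have hn' : (0:ℝ) < n := by exact_mod_cast hn
  have h := G0_concaveOn.le_map_sum (t := Finset.univ) (w := fun _ : Fin n => (n:ℝ)⁻¹)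
    (p := p) (fun i _ => by positivity) (by simp [Finset.card_univ, mul_inv_cancel₀ hn'.ne'])
    (fun i _ => hp i)
  have hsum : (∑ i : Fin n, (n:ℝ)⁻¹ • p i) = ((∑ k, (p k).1) / n, (∑ k, (p k).2) / n) := by
    rw [← Finset.smul_sum]
    ext <;> simp [div_eq_inv_mul, Prod.fst_sum, Prod.snd_sum]
  rw [hsum] at h
  simpa [smul_eq_mul, ← Finset.mul_sum, div_eq_inv_mul] using h
end

section
/- Let λ = 9996/10000. For all real numbers x, y with 1/13 ≤ x ≤ 1/2 and 0 ≤ y ≤ 1/2, one has x(1/2 − x)(2 + y) + y(1/2 − y)(1 − x) ≤ λ · (1 − x)(x + y/2). -/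
/-- The contraction inequality for the recursion `F(x, y) = (1 − x)/(2 + y)` amortized by
the potential `Φ(x) = 1/(x(1/2 − x))`: for `1/13 ≤ x ≤ 1/2` and `0 ≤ y ≤ 1/2`,
`x(1/2 − x)(2 + y) + y(1/2 − y)(1 − x) ≤ λ(1 − x)(x + y/2)` with `λ = 9996/10000`. -/
theorem contraction_deg1 (x y : ℝ) (hx1 : 1 / 13 ≤ x) (hx2 : x ≤ 1 / 2)
    (hy1 : 0 ≤ y) (hy2 : y ≤ 1 / 2) :
    x * (1 / 2 - x) * (2 + y) + y * (1 / 2 - y) * (1 - x) ≤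
      (9996 / 10000) * ((1 - x) * (x + y / 2)) := by
  nlinarith [sq_nonneg (x-y), sq_nonneg (x+y), mul_nonneg (sub_nonneg.2 hx1) hy1, mul_nonneg (sub_nonneg.2 hx2) (sub_nonneg.2 hy2), mul_nonneg (sub_nonneg.2 hx2) hy1, mul_nonneg hy1 (sub_nonneg.2 hy2), mul_nonneg (sub_nonneg.2 hx1) (sub_nonneg.2 hx2), sq_nonneg (x - 1/2), sq_nonneg (y - 1/2), mul_nonneg (mul_nonneg (sub_nonneg.2 hx1) (sub_nonneg.2 hx2)) hy1, mul_nonneg (mul_nonneg (sub_nonneg.2 hx1) (sub_nonneg.2 hx2)) (sub_nonneg.2 hy2)]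
end

section
/- Let f_1, f_2, f_3, f_4 ∈ [1/13, 1/2] with f_1 + f_2 + f_3 + f_4 = 1 and f_j ≤ 4f_1 for j = 2, 3, 4, and let y_1, y_2, y_3, y_4 ∈ [0, 1/2]. Set A = Σ_{j=1}^{4}(1 − f_j)(1 − y_j), F_k = (1 − f_k)(1 − y_k)/A for k = 1,…,4, and D_j = 1/(1 − f_1) − Σ_{k∈{1,2,3,4}∖{j}} F_k/(1 − f_k) for j = 2, 3, 4. Then at least two of the three numbers D_2, D_3, D_4 are nonnegative; equivalently, for no two distinct indices j, j' ∈ {2, 3, 4} can both D_j < 0 and D_{j'} < 0 hold. -/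
/-!
Since `F_k / (1 - f_k) = (1 - y_k) / A`, the condition `0 ≤ D_j` reads
`(1 - f₁) Σ_{k ≠ j} (1 - y_k) ≤ A`, and after cancelling the `k = 1` term of `A` it only involves
`u_k = 1 - y_k ∈ [1/2, 1]` for `k = 2, 3, 4`. If it failed for two indices `j ≠ k`, with `m` the
third one, adding the two failures would give
`(1 + f₁ - 2f_j) u_j + (1 + f₁ - 2f_k) u_k + 2 (f₁ - f_m) u_m < 0`.
The first two coefficients are nonnegative and `u_j, u_k ≥ 1/2`, so by `f_j + f_k = 1 - f₁ - f_m`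
the left side is at least `2f₁ + f_m + 2 (f₁ - f_m) u_m`, which is affine in `u_m` and equals
`3f₁ ≥ 0` at `u_m = 1/2` and `4f₁ - f_m ≥ 0` at `u_m = 1`.
-/

open Set

theorem one_div_sub_sum_nonneg_iff {A g₁ g₂ g₃ u₁ u₂ u₃ : ℝ} (hA : 0 < A) (hg₁ : 0 < g₁)
    (hg₂ : g₂ ≠ 0) (hg₃ : g₃ ≠ 0) :
    0 ≤ 1 / g₁ - (g₁ * u₁ / A / g₁ + g₂ * u₂ / A / g₂ + g₃ * u₃ / A / g₃) ↔
      g₁ * (u₁ + u₂ + u₃) ≤ A := by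
  have cancel : ∀ {g u : ℝ}, g ≠ 0 → g * u / A / g = u / A := fun hg => by
    rw [mul_div_assoc, mul_div_cancel_left₀ _ hg]
  rw [cancel hg₁.ne', cancel hg₂, cancel hg₃, ← add_div, ← add_div, sub_nonneg,
    div_le_div_iff₀ hA hg₁, one_mul, mul_comm]

theorem le_or_le_of_sum_eq_one {f₁ fⱼ fₖ fₘ uⱼ uₖ uₘ B : ℝ} (hf₁ : 0 ≤ f₁) (hfⱼ : fⱼ ≤ 1 / 2)
    (hfₖ : fₖ ≤ 1 / 2) (hfₘ : fₘ ≤ 4 * f₁) (hsum : f₁ + fⱼ + fₖ + fₘ = 1) (huⱼ : 1 / 2 ≤ uⱼ)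
    (huₖ : 1 / 2 ≤ uₖ) (huₘ : uₘ ∈ Icc (1 / 2 : ℝ) 1)
    (hB : B = (1 - fⱼ) * uⱼ + (1 - fₖ) * uₖ + (1 - fₘ) * uₘ) :
    (1 - f₁) * (uₖ + uₘ) ≤ B ∨ (1 - f₁) * (uⱼ + uₘ) ≤ B := by
  have hⱼ : (1 + f₁ - 2 * fⱼ) / 2 ≤ (1 + f₁ - 2 * fⱼ) * uⱼ := by nlinarith
  have hₖ : (1 + f₁ - 2 * fₖ) / 2 ≤ (1 + f₁ - 2 * fₖ) * uₖ := by nlinarith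
  have hₘ : 0 ≤ 2 * f₁ + fₘ + 2 * (f₁ - fₘ) * uₘ := by
    have convex : 2 * f₁ + fₘ + 2 * (f₁ - fₘ) * uₘ =
        (2 * uₘ - 1) * (4 * f₁ - fₘ) + (2 - 2 * uₘ) * (3 * f₁) := by ring
    rw [convex]
    exact add_nonneg (mul_nonneg (by linarith [huₘ.1]) (by linarith))
      (mul_nonneg (by linarith [huₘ.2]) (by linarith))
  by_contra! h
  linarith [h.1, h.2]

/-- At least two of the three quantities `D₂, D₃, D₄` are nonnegative, where
`D_j = 1/(1 − f₁) − Σ_{k ≠ j} F_k/(1 − f_k)` with `F_k = (1 − f_k)(1 − y_k)/A` and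
`A = Σ_j (1 − f_j)(1 − y_j)`, under the hypotheses `f_j ∈ [1/13, 1/2]`,
`Σ f_j = 1`, `f_j ≤ 4f₁` for `j = 2, 3, 4`, and `y_j ∈ [0, 1/2]`. -/
theorem two_nonnegative (f1 f2 f3 f4 y1 y2 y3 y4 : ℝ)
    (hf1 : f1 ∈ Set.Icc (1 / 13 : ℝ) (1 / 2)) (hf2 : f2 ∈ Set.Icc (1 / 13 : ℝ) (1 / 2))
    (hf3 : f3 ∈ Set.Icc (1 / 13 : ℝ) (1 / 2)) (hf4 : f4 ∈ Set.Icc (1 / 13 : ℝ) (1 / 2))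
    (hsum : f1 + f2 + f3 + f4 = 1)
    (hr2 : f2 ≤ 4 * f1) (hr3 : f3 ≤ 4 * f1) (hr4 : f4 ≤ 4 * f1)
    (hy1 : y1 ∈ Set.Icc (0 : ℝ) (1 / 2)) (hy2 : y2 ∈ Set.Icc (0 : ℝ) (1 / 2))
    (hy3 : y3 ∈ Set.Icc (0 : ℝ) (1 / 2)) (hy4 : y4 ∈ Set.Icc (0 : ℝ) (1 / 2)) :
    let A := (1 - f1) * (1 - y1) + (1 - f2) * (1 - y2) +
      (1 - f3) * (1 - y3) + (1 - f4) * (1 - y4)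
    let F1 := (1 - f1) * (1 - y1) / A
    let F2 := (1 - f2) * (1 - y2) / A
    let F3 := (1 - f3) * (1 - y3) / A
    let F4 := (1 - f4) * (1 - y4) / A
    let D2 := 1 / (1 - f1) - (F1 / (1 - f1) + F3 / (1 - f3) + F4 / (1 - f4))
    let D3 := 1 / (1 - f1) - (F1 / (1 - f1) + F2 / (1 - f2) + F4 / (1 - f4))
    let D4 := 1 / (1 - f1) - (F1 / (1 - f1) + F2 / (1 - f2) + F3 / (1 - f3))
    (0 ≤ D2 ∧ 0 ≤ D3) ∨ (0 ≤ D2 ∧ 0 ≤ D4) ∨ (0 ≤ D3 ∧ 0 ≤ D4) := by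
  intro A F1 F2 F3 F4 D2 D3 D4
  have hg : ∀ f ∈ Icc (1 / 13 : ℝ) (1 / 2), 0 < 1 - f := fun f hf => by linarith [hf.2]
  have hu : ∀ y ∈ Icc (0 : ℝ) (1 / 2), 1 - y ∈ Icc (1 / 2 : ℝ) 1 :=
    fun y hy => ⟨by linarith [hy.2], by linarith [hy.1]⟩
  have hA : 0 < A := by
    have term : ∀ f ∈ Icc (1 / 13 : ℝ) (1 / 2), ∀ y ∈ Icc (0 : ℝ) (1 / 2),
        0 < (1 - f) * (1 - y) := fun f hf y hy => mul_pos (hg f hf) (by linarith [(hu y hy).1])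
    linarith [term f1 hf1 y1 hy1, term f2 hf2 y2 hy2, term f3 hf3 y3 hy3, term f4 hf4 y4 hy4]
  have hD2 : 0 ≤ D2 ↔ (1 - f1) * ((1 - y1) + (1 - y3) + (1 - y4)) ≤ A :=
    one_div_sub_sum_nonneg_iff hA (hg f1 hf1) (hg f3 hf3).ne' (hg f4 hf4).ne'
  have hD3 : 0 ≤ D3 ↔ (1 - f1) * ((1 - y1) + (1 - y2) + (1 - y4)) ≤ A :=
    one_div_sub_sum_nonneg_iff hA (hg f1 hf1) (hg f2 hf2).ne' (hg f4 hf4).ne'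
  have hD4 : 0 ≤ D4 ↔ (1 - f1) * ((1 - y1) + (1 - y2) + (1 - y3)) ≤ A :=
    one_div_sub_sum_nonneg_iff hA (hg f1 hf1) (hg f2 hf2).ne' (hg f3 hf3).ne'
  obtain ⟨B, hB⟩ : ∃ B, B = (1 - f2) * (1 - y2) + (1 - f3) * (1 - y3) + (1 - f4) * (1 - y4) :=
    ⟨_, rfl⟩
  have hAB : A = (1 - f1) * (1 - y1) + B := by simp only [A, hB]; ring
  have hf1₀ : 0 ≤ f1 := by linarith [hf1.1]
  have h23 := le_or_le_of_sum_eq_one hf1₀ hf2.2 hf3.2 hr4 hsum (hu y2 hy2).1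
    (hu y3 hy3).1 (hu y4 hy4) hB
  have h24 := le_or_le_of_sum_eq_one hf1₀ hf2.2 hf4.2 hr3 (by linarith)
    (hu y2 hy2).1 (hu y4 hy4).1 (hu y3 hy3) (B := B) (by rw [hB]; ring)
  have h34 := le_or_le_of_sum_eq_one hf1₀ hf3.2 hf4.2 hr2 (by linarith)
    (hu y3 hy3).1 (hu y4 hy4).1 (hu y2 hy2) (B := B) (by rw [hB]; ring)
  rw [hD2, hD3, hD4, hAB]
  grind
end

section
/- Let M = 3/2 − √2 and λ = 9996/10000. For all f_2, f_3, f_4 ∈ [0, 1/2] with f_2 + f_3 + f_4 = 1 and all y_2, y_3, y_4 ∈ [0, 6/13], setting A = 1 + Σ_{j=2}^{4}(1 − f_j)(1 − y_j), one has Σ_{j=2}^{4}(1 − f_j)·y_j(1/2 − y_j) + 2M·f_2·(A − 3 + y_3 + y_4) < λ · (A/2 − 1). -/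
set_option maxHeartbeats 2000000 in
/-- With `M = 3/2 − √2` and `λ = 9996/10000`: for `f₂, f₃, f₄ ∈ [0, 1/2]` summing to `1`
and `y₂, y₃, y₄ ∈ [0, 6/13]`, setting `A = 1 + Σ_{j=2}^{4}(1 − f_j)(1 − y_j)`,
`Σ_{j=2}^{4}(1 − f_j)y_j(1/2 − y_j) + 2Mf₂(A − 3 + y₃ + y₄) < λ(A/2 − 1)`. -/
theorem contraction_case2 (f2 f3 f4 y2 y3 y4 : ℝ)
    (hf2 : f2 ∈ Set.Icc (0 : ℝ) (1 / 2)) (hf3 : f3 ∈ Set.Icc (0 : ℝ) (1 / 2))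
    (hf4 : f4 ∈ Set.Icc (0 : ℝ) (1 / 2)) (hsum : f2 + f3 + f4 = 1)
    (hy2 : y2 ∈ Set.Icc (0 : ℝ) (6 / 13)) (hy3 : y3 ∈ Set.Icc (0 : ℝ) (6 / 13))
    (hy4 : y4 ∈ Set.Icc (0 : ℝ) (6 / 13)) :
    let A := 1 + ((1 - f2) * (1 - y2) + (1 - f3) * (1 - y3) + (1 - f4) * (1 - y4))
    (1 - f2) * (y2 * (1 / 2 - y2)) + (1 - f3) * (y3 * (1 / 2 - y3)) +
        (1 - f4) * (y4 * (1 / 2 - y4)) +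
        2 * (3 / 2 - Real.sqrt 2) * f2 * (A - 3 + y3 + y4) <
      (9996 / 10000) * (A / 2 - 1) := by
  intro A
  obtain ⟨hf2l, hf2u⟩ := hf2
  obtain ⟨hf3l, hf3u⟩ := hf3
  obtain ⟨hf4l, hf4u⟩ := hf4
  obtain ⟨hy2l, hy2u⟩ := hy2
  obtain ⟨hy3l, hy3u⟩ := hy3
  obtain ⟨hy4l, hy4u⟩ := hy4
  have hf4e : f4 = 1 - f2 - f3 := by linarith
  subst hf4e
  set r := Real.sqrt 2 with hrdef
  have hr2 : r ^ 2 = 2 := Real.sq_sqrt (by norm_num)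
  have hrpos : (0:ℝ) ≤ r := Real.sqrt_nonneg 2
  have hrl : (14142/10000 : ℝ) ≤ r := by nlinarith
  have hru : r ≤ (141422/100000 : ℝ) := by nlinarith
  have hM : (0:ℝ) ≤ 3/2 - r := by linarith
  have h1f2 : (0:ℝ) ≤ 1 - f2 := by linarith
  have h1f3 : (0:ℝ) ≤ 1 - f3 := by linarith
  have h1f4 : (0:ℝ) ≤ f2 + f3 := by linarith
  -- vertex bound for y2
  have key2 : (1 - f2) * (y2 * (1/2 - y2)) + (4998/10000) * ((1-f2)*y2)
      - 2*(3/2 - r)*f2*((1-f2)*y2)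
      ≤ (1 - f2) * (9998/10000 - 2*(3/2 - r)*f2)^2 / 4 := by
    nlinarith [mul_nonneg h1f2 (sq_nonneg (9998/10000 - 2*(3/2 - r)*f2 - 2*y2))]
  -- monotone bound for y3
  have key3 : (1 - f3) * (y3 * (1/2 - y3)) + (4998/10000) * ((1-f3)*y3)
      + 2*(3/2 - r)*f2*(f3*y3)
      ≤ (6/13) * ((1-f3)*(9998/10000 - 6/13) + 2*(3/2 - r)*f2*f3) := by
    nlinarith [mul_nonneg (mul_nonneg h1f3 (by linarith : (0:ℝ) ≤ 6/13 - y3))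
        (by linarith : (0:ℝ) ≤ 9998/10000 - 6/13 - y3),
      mul_nonneg (mul_nonneg (mul_nonneg hM hf2l) hf3l) (by linarith : (0:ℝ) ≤ 6/13 - y3)]
  -- monotone bound for y4
  have key4 : (f2 + f3) * (y4 * (1/2 - y4)) + (4998/10000) * ((f2+f3)*y4)
      + 2*(3/2 - r)*f2*((1 - f2 - f3)*y4)
      ≤ (6/13) * ((f2+f3)*(9998/10000 - 6/13) + 2*(3/2 - r)*f2*(1 - f2 - f3)) := by
    linarith [mul_nonneg (mul_nonneg h1f4 (by linarith : (0:ℝ) ≤ 6/13 - y4))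
        (by linarith : (0:ℝ) ≤ 9998/10000 - 6/13 - y4),
      mul_nonneg (mul_nonneg (mul_nonneg hM hf2l) (by linarith : (0:ℝ) ≤ 1 - f2 - f3))
        (by linarith : (0:ℝ) ≤ 6/13 - y4)]
  -- cubic bound in f2 (and r)
  have e2 : f2^2 * r^2 = 2 * f2^2 := by rw [hr2]; ring
  have e3 : f2^2*f2 * r^2 = 2 * (f2^2*f2) := by rw [hr2]; ring
  have A1 : (0:ℝ) ≤ f2^2*f2 * (17/4 - 3*r) :=
    mul_nonneg (by positivity) (by linarith)
  have A2 : (0:ℝ) ≤ (567461/130000 - 199987/65000 * r) * (f2 * (1/2 - f2)) :=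
    mul_nonneg (by linarith) (mul_nonneg hf2l (by linarith))
  have A3 : (0:ℝ) ≤ f2 * (r - 14142/10000) := mul_nonneg hf2l (by linarith)
  have key1 : (1 - f2) * (9998/10000 - 2*(3/2 - r)*f2)^2 / 4
      + (6/13) * ((1-f3)*(9998/10000 - 6/13) + 2*(3/2 - r)*f2*f3)
      + (6/13) * ((f2+f3)*(9998/10000 - 6/13) + 2*(3/2 - r)*f2*(1 - f2 - f3))
      < 4998/10000 := by nlinarith [e2, e3, A1, A2, A3]
  simp only [A]
  nlinarith [key1, key2, key3, key4]
end
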